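/- arXiv:2508.11973 — 2 statements merged into one kernel-verified Lean document; each statement's English description precedes it below -/
import Mathlib

section
/- With notation as in the construction of the groups G_A: inside A Wr Z, for even m and odd n define f̄_n : Z → A by f̄_n(z) = ∏_{i ∈ supp(z)} a_{n-i}^{|z|_{z_i}}, and f̃_n the constant function with value a_n. Then [z_m, f̄_n] = f̃_{n-m}, [z_m^{-1}, f̄_n] = [z_m, f̄_n^{-1}] = (f̃_{n-m})^{-1}, and [z_m, f̃_n] = 1. -/
/- The free abelian group `Z` with basis `{z_i : i ∈ ℤ}`, realized as `ℤ →₀ ℤ`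
   (with `z i = Finsupp.single i 1`), and the unrestricted wreath product
   `A Wr Z`, realized as the semidirect product of the group of functions
   `Z → A` (pointwise multiplication) with `Multiplicative Z`, acting by
   `(z' • f) z = f (z + z')`. -/

abbrev ZB : Type := ℤ →₀ ℤ

/-- The shift automorphism `f ↦ (z ↦ f (z + t))` of the group of functions `Z → A`. -/
noncomputable def shiftEquiv {A : Type*} [CommGroup A] (t : ZB) : (ZB → A) ≃* (ZB → A) where
  toFun f := fun z => f (z + t)
  invFun f := fun z => f (z - t)
  left_inv f := by funext z; simp
  right_inv f := by funext z; simp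
  map_mul' f g := rfl

/-- The translation action of `Z` on `Z → A`. -/
noncomputable def wAct (A : Type*) [CommGroup A] : Multiplicative ZB →* MulAut (ZB → A) where
  toFun t := shiftEquiv (Multiplicative.toAdd t)
  map_one' := by
    apply MulEquiv.ext; intro f; funext z; simp [shiftEquiv]
  map_mul' x y := by
    apply MulEquiv.ext; intro f; funext z; simp [shiftEquiv, add_assoc]

/-- The unrestricted wreath product `A Wr Z`. -/
abbrev WreathZ (A : Type*) [CommGroup A] : Type _ :=
  SemidirectProduct (ZB → A) (Multiplicative ZB) (wAct A)

/-- The basis element `z_k` of `Z`, viewed inside `A Wr Z`. -/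
noncomputable def zElt (A : Type*) [CommGroup A] (k : ℤ) : WreathZ A :=
  SemidirectProduct.inr (Multiplicative.ofAdd (Finsupp.single k 1))

/-- `f_{m,n} : Z → ⟨a_n⟩`, `f_{m,n}(z) = a_n ^ |z|_{z_m}`. -/
def fmn {A : Type*} [CommGroup A] (a : ℤ → A) (m n : ℤ) : ZB → A :=
  fun z => a n ^ (z m)

/-- The constant function `f̃_n : Z → ⟨a_n⟩` with value `a_n`. -/
def ftil {A : Type*} [CommGroup A] (a : ℤ → A) (n : ℤ) : ZB → A :=
  fun _ => a n

/-- `f̄_n : Z → A`, `f̄_n(z) = ∏_{i ∈ supp z} a_{n-i} ^ |z|_{z_i}`. -/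
def fbar {A : Type*} [CommGroup A] (a : ℤ → A) (n : ℤ) : ZB → A :=
  fun z => z.prod fun i e => a (n - i) ^ e

open scoped commutatorElement

/- Since `Z` acts on `A^Z` by translation, `[t, f] = (t • f) f⁻¹` for `t ∈ Z`; when `f : Z → A` is
a homomorphism this is the constant function with value `f t`, and when `f` is constant it is `1`.
The function `f̄_n` is the homomorphism sending `z_i` to `a_{n-i}`, so `[z_m, f̄_n]` is the constant
`a_{n-m}`. -/

section WreathZ

variable {A : Type*} [CommGroup A]

lemma wAct_apply (t : Multiplicative ZB) (f : ZB → A) (z : ZB) :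
    wAct A t f z = f (z + t.toAdd) := rfl

lemma commutatorElement_inr_inl (t : Multiplicative ZB) (f : ZB → A) :
    ⁅(SemidirectProduct.inr t : WreathZ A), (SemidirectProduct.inl f : WreathZ A)⁆ =
      SemidirectProduct.inl (wAct A t f * f⁻¹) := by
  rw [commutatorElement_def, ← map_inv, ← map_inv, ← SemidirectProduct.inl_aut, ← map_mul]

lemma commutatorElement_inr_inl_of_map_add {f : ZB → A} (hf : ∀ z w, f (z + w) = f z * f w)
    (t : ZB) :
    ⁅(SemidirectProduct.inr (Multiplicative.ofAdd t) : WreathZ A),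
        (SemidirectProduct.inl f : WreathZ A)⁆ =
      SemidirectProduct.inl (fun _ => f t) := by
  rw [commutatorElement_inr_inl]
  congr 1
  funext z
  rw [Pi.mul_apply, Pi.inv_apply, wAct_apply, toAdd_ofAdd, hf, mul_inv_cancel_comm]

lemma commutatorElement_inr_inl_const (t : Multiplicative ZB) (c : A) :
    ⁅(SemidirectProduct.inr t : WreathZ A),
        (SemidirectProduct.inl (fun _ => c) : WreathZ A)⁆ = 1 := by
  rw [commutatorElement_inr_inl, ← map_one SemidirectProduct.inl]
  congr 1
  exact mul_inv_cancel _

lemma zElt_inv (m : ℤ) :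
    (zElt A m)⁻¹ = SemidirectProduct.inr (Multiplicative.ofAdd (-Finsupp.single m 1)) := by
  rw [zElt, ← map_inv, ofAdd_neg]

end WreathZ

section fbar

variable {A : Type*} [CommGroup A] (a : ℤ → A) (n : ℤ)

lemma fbar_add (z w : ZB) : fbar a n (z + w) = fbar a n z * fbar a n w :=
  Finsupp.prod_add_index' (fun _ => zpow_zero _) (fun _ _ _ => zpow_add _ _ _)

lemma fbar_inv_add (z w : ZB) :
    (fbar a n)⁻¹ (z + w) = (fbar a n)⁻¹ z * (fbar a n)⁻¹ w := by
  simp only [Pi.inv_apply, fbar_add, mul_inv]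

lemma fbar_single (m : ℤ) : fbar a n (Finsupp.single m 1) = a (n - m) :=
  (Finsupp.prod_single_index (zpow_zero _)).trans (zpow_one _)

lemma fbar_neg (z : ZB) : fbar a n (-z) = (fbar a n z)⁻¹ := by
  refine eq_inv_of_mul_eq_one_left ?_
  rw [← fbar_add, neg_add_cancel]
  exact Finsupp.prod_zero_index

end fbar

theorem commutator_z_fbar_general {A : Type*} [CommGroup A] (a : ℤ → A)
    (m n : ℤ) :
    ⁅zElt A m, (SemidirectProduct.inl (fbar a n) : WreathZ A)⁆ =
        SemidirectProduct.inl (ftil a (n - m)) ∧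
    ⁅(zElt A m)⁻¹, (SemidirectProduct.inl (fbar a n) : WreathZ A)⁆ =
        (SemidirectProduct.inl (ftil a (n - m)) : WreathZ A)⁻¹ ∧
    ⁅zElt A m, (SemidirectProduct.inl (fbar a n) : WreathZ A)⁻¹⁆ =
        (SemidirectProduct.inl (ftil a (n - m)) : WreathZ A)⁻¹ ∧
    ⁅zElt A m, (SemidirectProduct.inl (ftil a n) : WreathZ A)⁆ = 1 := by
  refine ⟨?_, ?_, ?_, commutatorElement_inr_inl_const _ _⟩
  · rw [zElt, commutatorElement_inr_inl_of_map_add (fbar_add a n), fbar_single]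
    rfl
  · rw [zElt_inv, commutatorElement_inr_inl_of_map_add (fbar_add a n), fbar_neg, fbar_single,
      ← map_inv]
    rfl
  · rw [← map_inv, zElt, commutatorElement_inr_inl_of_map_add (fbar_inv_add a n), Pi.inv_apply,
      fbar_single, ← map_inv]
    rfl

/-- Property 2.2. For even `m` and odd `n`, inside `A Wr Z`:
`[z_m, f̄_n] = f̃_{n-m}`, `[z_m⁻¹, f̄_n] = [z_m, f̄_n⁻¹] = (f̃_{n-m})⁻¹`, and
`[z_m, f̃_n] = 1`. -/
theorem commutator_z_fbar {A : Type*} [CommGroup A] (a : ℤ → A)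
    (m n : ℤ) (hm : Even m) (hn : Odd n) :
    ⁅zElt A m, (SemidirectProduct.inl (fbar a n) : WreathZ A)⁆ =
        SemidirectProduct.inl (ftil a (n - m)) ∧
    ⁅(zElt A m)⁻¹, (SemidirectProduct.inl (fbar a n) : WreathZ A)⁆ =
        (SemidirectProduct.inl (ftil a (n - m)) : WreathZ A)⁻¹ ∧
    ⁅zElt A m, (SemidirectProduct.inl (fbar a n) : WreathZ A)⁻¹⁆ =
        (SemidirectProduct.inl (ftil a (n - m)) : WreathZ A)⁻¹ ∧
    ⁅zElt A m, (SemidirectProduct.inl (ftil a n) : WreathZ A)⁆ = 1 :=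
  commutator_z_fbar_general a m n
end

section
/- If G ≤ H are finitely generated residually finite groups with finite generating sets X and Y respectively, then rf_{G,X}(n) ≼ rf_{H,Y}(n), i.e., there exists a constant C such that rf_{G,X}(n) ≤ C · rf_{H,Y}(Cn) for all n. -/
/-- The residual finiteness depth of `g`: the least index of a finite-index
normal subgroup of `G` not containing `g` (and `0` if none exists). -/
noncomputable def rfDepth {G : Type*} [Group G] (g : G) : ℕ :=
  sInf { d : ℕ | d ≠ 0 ∧ ∃ N : Subgroup G, N.Normal ∧ g ∉ N ∧ N.index = d }

/-- Word length of `g` with respect to a generating set `X` (using `X ∪ X⁻¹`). -/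
noncomputable def wordLength {G : Type*} [Group G] (X : Set G) (g : G) : ℕ :=
  sInf { n : ℕ | ∃ l : List G, (∀ x ∈ l, x ∈ X ∨ x⁻¹ ∈ X) ∧ l.length = n ∧ l.prod = g }

/-- The residual finiteness growth function `rf_{G,X}`. -/
noncomputable def rfGrowth {G : Type*} [Group G] (X : Set G) (n : ℕ) : ℕ :=
  sSup { d : ℕ | ∃ g : G, g ≠ 1 ∧ wordLength X g ≤ n ∧ rfDepth g = d }

/-- `G` is residually finite. -/
def ResiduallyFinite (G : Type*) [Group G] : Prop :=
  ∀ g : G, g ≠ 1 → ∃ N : Subgroup G, N.Normal ∧ N.index ≠ 0 ∧ g ∉ N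


/-! A finite-index normal subgroup of `H` avoiding `ι g` pulls back along `ι` to one of no
larger index avoiding `g`, so `rfDepth g ≤ rfDepth (ι g)`. Since `X` is finite, `ι` is
`C`-Lipschitz for the word lengths, `C` bounding the `Y`-lengths of the images of the letters
`X ∪ X⁻¹`; hence every `g ≠ 1` of `X`-length `≤ n` is witnessed in `rf_{H,Y}(C n)` by `ι g`. -/

section WordLength

variable {G H : Type*} [Group G] [Group H] {X : Set G} {Y : Set H}

lemma wordLength_prod_le_length {l : List G} (hl : ∀ x ∈ l, x ∈ X ∨ x⁻¹ ∈ X) :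
    wordLength X l.prod ≤ l.length :=
  Nat.sInf_le ⟨l, hl, rfl, rfl⟩

lemma exists_list_length_eq_wordLength (hX : Subgroup.closure X = ⊤) (g : G) :
    ∃ l : List G, (∀ x ∈ l, x ∈ X ∨ x⁻¹ ∈ X) ∧ l.length = wordLength X g ∧ l.prod = g := by
  have hg : g ∈ Submonoid.closure (X ∪ X⁻¹) := by
    rw [← Subgroup.closure_toSubmonoid, hX]
    trivial
  obtain ⟨l, hl, hlg⟩ := Submonoid.exists_list_of_mem_closure hg
  exact Nat.sInf_mem
    (s := {n | ∃ l : List G, (∀ x ∈ l, x ∈ X ∨ x⁻¹ ∈ X) ∧ l.length = n ∧ l.prod = g})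
    ⟨l.length, l, hl, rfl, hlg⟩

lemma wordLength_list_prod_le (hY : Subgroup.closure Y = ⊤) (l : List H) :
    wordLength Y l.prod ≤ (l.map (wordLength Y)).sum := by
  choose w hw hlen hprod using exists_list_length_eq_wordLength hY
  calc wordLength Y l.prod = wordLength Y (l.map w).flatten.prod := by
        simp [List.prod_flatten, List.map_map, Function.comp_def, hprod]
    _ ≤ (l.map w).flatten.length := wordLength_prod_le_length (by simpa using fun x a _ ↦ hw a x)
    _ = (l.map (wordLength Y)).sum := by simp [List.length_flatten, Function.comp_def, hlen]

lemma exists_wordLength_map_le_mul (f : G →* H) (hXfin : X.Finite)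
    (hX : Subgroup.closure X = ⊤) (hY : Subgroup.closure Y = ⊤) :
    ∃ C : ℕ, 0 < C ∧ ∀ g, wordLength Y (f g) ≤ C * wordLength X g := by
  obtain ⟨C, hC⟩ := ((hXfin.union hXfin.inv).image (wordLength Y ∘ f)).bddAbove
  refine ⟨C + 1, C.succ_pos, fun g ↦ ?_⟩
  obtain ⟨l, hl, hlen, rfl⟩ := exists_list_length_eq_wordLength hX g
  have hletter : ∀ x ∈ l, wordLength Y (f x) ≤ C + 1 := fun x hx ↦
    (hC ⟨x, hl x hx, rfl⟩).trans C.le_succ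
  calc wordLength Y (f l.prod) ≤ ((l.map f).map (wordLength Y)).sum := by
        rw [← List.prod_hom l f]
        exact wordLength_list_prod_le hY _
    _ ≤ l.length • (C + 1) :=
        List.sum_le_card_nsmul _ _ (by simpa [List.map_map] using hletter) |>.trans (by simp)
    _ = (C + 1) * wordLength X l.prod := by rw [hlen, smul_eq_mul, mul_comm]

lemma finite_setOf_wordLength_le (hYfin : Y.Finite) (hY : Subgroup.closure Y = ⊤) (m : ℕ) :
    {h : H | wordLength Y h ≤ m}.Finite := by
  have := (hYfin.union hYfin.inv).to_subtype
  refine ((List.finite_length_le ↥(Y ∪ Y⁻¹) m).image fun l ↦ (l.map (↑)).prod).subset ?_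
  intro h hh
  obtain ⟨l, hl, hlen, rfl⟩ := exists_list_length_eq_wordLength hY h
  lift l to List ↥(Y ∪ Y⁻¹) using hl
  exact ⟨l, by simpa using hlen.trans_le hh, rfl⟩

end WordLength

section Depth

variable {G H : Type*} [Group G] [Group H]

lemma rfDepth_le_index {g : G} {N : Subgroup G} (hN : N.Normal) (hgN : g ∉ N)
    (hN0 : N.index ≠ 0) : rfDepth g ≤ N.index :=
  Nat.sInf_le ⟨hN0, N, hN, hgN, rfl⟩

lemma ResiduallyFinite.rfDepth_ne_zero (hG : ResiduallyFinite G) {g : G} (hg : g ≠ 1) :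
    rfDepth g ≠ 0 := by
  obtain ⟨N, hN, hN0, hgN⟩ := hG g hg
  exact (Nat.sInf_mem (s := {d | d ≠ 0 ∧ ∃ N : Subgroup G, N.Normal ∧ g ∉ N ∧ N.index = d})
    ⟨N.index, hN0, N, hN, hgN, rfl⟩).1

lemma exists_normal_index_eq_rfDepth {g : G} (hg : rfDepth g ≠ 0) :
    ∃ N : Subgroup G, N.Normal ∧ g ∉ N ∧ N.index = rfDepth g :=
  (Nat.sInf_mem (Nat.nonempty_of_pos_sInf (Nat.pos_of_ne_zero hg))).2

lemma rfDepth_le_rfDepth_map (f : G →* H) {g : G} (hfg : rfDepth (f g) ≠ 0) :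
    rfDepth g ≤ rfDepth (f g) := by
  obtain ⟨N, hN, hgN, hNi⟩ := exists_normal_index_eq_rfDepth hfg
  have hdvd : (N.comap f).index ∣ N.index := by
    rw [Subgroup.index_comap]
    exact Subgroup.relIndex_dvd_index_of_normal N f.range
  have hN0 : N.index ≠ 0 := hNi ▸ hfg
  calc rfDepth g ≤ (N.comap f).index :=
        rfDepth_le_index (hN.comap f) hgN (ne_zero_of_dvd_ne_zero hN0 hdvd)
    _ ≤ rfDepth (f g) := hNi ▸ Nat.le_of_dvd (Nat.pos_of_ne_zero hN0) hdvd

lemma rfDepth_le_rfGrowth {Y : Set H} (hYfin : Y.Finite) (hY : Subgroup.closure Y = ⊤)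
    {h : H} {m : ℕ} (h1 : h ≠ 1) (hm : wordLength Y h ≤ m) : rfDepth h ≤ rfGrowth Y m := by
  refine le_csSup ?_ ⟨h, h1, hm, rfl⟩
  refine ((finite_setOf_wordLength_le hYfin hY m).image rfDepth).bddAbove.mono ?_
  rintro _ ⟨h, -, hm, rfl⟩
  exact ⟨h, hm, rfl⟩

lemma rfGrowth_le_rfGrowth_mul_of_injective {X : Set G} {Y : Set H} (f : G →* H)
    (hf : Function.Injective f) (hYfin : Y.Finite) (hY : Subgroup.closure Y = ⊤)
    (hH : ResiduallyFinite H) {C : ℕ} (hlip : ∀ g, wordLength Y (f g) ≤ C * wordLength X g)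
    (n : ℕ) : rfGrowth X n ≤ rfGrowth Y (C * n) := by
  refine csSup_le' ?_
  rintro _ ⟨g, hg, hgn, rfl⟩
  have hfg : f g ≠ 1 := (map_ne_one_iff f hf).2 hg
  calc rfDepth g ≤ rfDepth (f g) := rfDepth_le_rfDepth_map f (hH.rfDepth_ne_zero hfg)
    _ ≤ rfGrowth Y (C * n) :=
      rfDepth_le_rfGrowth hYfin hY hfg ((hlip g).trans (Nat.mul_le_mul_left C hgn))

end Depth

theorem rfGrowth_dominated_of_subgroup_general {G H : Type*} [Group G] [Group H]
    (ι : G →* H) (hι : Function.Injective ι)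
    (X : Set G) (Y : Set H) (hXfin : X.Finite) (hYfin : Y.Finite)
    (hXgen : Subgroup.closure X = ⊤) (hYgen : Subgroup.closure Y = ⊤)
    (hH : ResiduallyFinite H) :
    ∃ C : ℕ, 0 < C ∧ ∀ n : ℕ, rfGrowth X n ≤ C * rfGrowth Y (C * n) := by
  obtain ⟨C, hC, hlip⟩ := exists_wordLength_map_le_mul ι hXfin hXgen hYgen
  exact ⟨C, hC, fun n ↦ (rfGrowth_le_rfGrowth_mul_of_injective ι hι hYfin hYgen hH hlip n).trans
    (Nat.le_mul_of_pos_left _ hC)⟩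

/-- If `G ≤ H` are finitely generated residually finite groups
with finite generating sets `X` and `Y` respectively, then
`rf_{G,X} ≼ rf_{H,Y}`: there is a constant `C > 0` with
`rf_{G,X}(n) ≤ C · rf_{H,Y}(C n)` for all `n`. -/
theorem rfGrowth_dominated_of_subgroup {G H : Type*} [Group G] [Group H]
    (ι : G →* H) (hι : Function.Injective ι)
    (X : Set G) (Y : Set H) (hXfin : X.Finite) (hYfin : Y.Finite)
    (hXgen : Subgroup.closure X = ⊤) (hYgen : Subgroup.closure Y = ⊤)
    (hG : ResiduallyFinite G) (hH : ResiduallyFinite H) :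
    ∃ C : ℕ, 0 < C ∧ ∀ n : ℕ, rfGrowth X n ≤ C * rfGrowth Y (C * n) :=
  rfGrowth_dominated_of_subgroup_general ι hι X Y hXfin hYfin hXgen hYgen hH
end
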